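/- arXiv:math/0606587 — 2 statements merged into one kernel-verified Lean document; each statement's English description precedes it below -/
import Mathlib

section
/- There is an absolute constant C such that for all choices of signs ±₁, ±₂ and all nonzero vectors η, ζ ∈ ℝ², the 2×2 matrix σ_{±₁,±₂}(η,ζ) := Π_{±₂}(ζ) β Π_{±₁}(η) satisfies the operator-norm bound ‖Π_{±₂}(ζ) β Π_{±₁}(η)‖ ≤ C ∠(±₁η, ±₂ζ), where ∠(a,b) ∈ [0,π] denotes the angle between the nonzero vectors a, b ∈ ℝ². -/
noncomputable section

open MeasureTheory Real
open scoped ENNReal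
open scoped RealInnerProductSpace

abbrev E2 : Type := EuclideanSpace ℝ (Fin 2)
abbrev C2 : Type := EuclideanSpace ℂ (Fin 2)

def signSet : Set ℝ := {1, -1}

/-- Space-time Fourier transform on ℝ^{1+2}. -/
def FTst {V : Type} [NormedAddCommGroup V] [NormedSpace ℂ V]
    (u : ℝ × E2 → V) (p : ℝ × E2) : V :=
  ∫ q : ℝ × E2,
    Complex.exp (-Complex.I * ((q.1 * p.1 + ⟪q.2, p.2⟫ : ℝ) : ℂ)) • u q

/-- Spatial Fourier transform on ℝ². -/
def FT2 (f : E2 → ℂ) (ξ : E2) : ℂ :=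
  ∫ x : E2, Complex.exp (-Complex.I * ((⟪x, ξ⟫ : ℝ) : ℂ)) * f x

/-- X^{s,b}_± norm; the sign is encoded by `sgn ∈ {1,-1}`. -/
def Xnorm {V : Type} [NormedAddCommGroup V] [NormedSpace ℂ V]
    (sgn s b : ℝ) (u : ℝ × E2 → V) : ℝ :=
  (∫ p : ℝ × E2,
      (1 + ‖p.2‖) ^ (2 * s) * (1 + |p.1 + sgn * ‖p.2‖|) ^ (2 * b) * ‖FTst u p‖ ^ 2)
    ^ ((1 : ℝ) / 2)

/-- X^{s,b}_± norm with homogeneous weight |ξ|^s. -/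
def XnormHom {V : Type} [NormedAddCommGroup V] [NormedSpace ℂ V]
    (sgn s b : ℝ) (u : ℝ × E2 → V) : ℝ :=
  (∫ p : ℝ × E2,
      ‖p.2‖ ^ (2 * s) * (1 + |p.1 + sgn * ‖p.2‖|) ^ (2 * b) * ‖FTst u p‖ ^ 2)
    ^ ((1 : ℝ) / 2)

/-- Wave-Sobolev H^{s,b} norm. -/
def Hnorm {V : Type} [NormedAddCommGroup V] [NormedSpace ℂ V]
    (s b : ℝ) (u : ℝ × E2 → V) : ℝ :=
  (∫ p : ℝ × E2,
      (1 + ‖p.2‖) ^ (2 * s) * (1 + |(|p.1| - ‖p.2‖)|) ^ (2 * b) * ‖FTst u p‖ ^ 2)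
    ^ ((1 : ℝ) / 2)

/-- Homogeneous Sobolev norm on ℝ². -/
def HdotNorm (s : ℝ) (f : E2 → ℂ) : ℝ :=
  (∫ ξ : E2, ‖ξ‖ ^ (2 * s) * ‖FT2 f ξ‖ ^ 2) ^ ((1 : ℝ) / 2)

def alpha1 : Matrix (Fin 2) (Fin 2) ℂ := !![0, 1; 1, 0]
def alpha2 : Matrix (Fin 2) (Fin 2) ℂ := !![0, -Complex.I; Complex.I, 0]
def diracBeta : Matrix (Fin 2) (Fin 2) ℂ := !![1, 0; 0, -1]

/-- The Dirac projection Π_±(ξ), sign encoded by `sgn ∈ {1,-1}`. -/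
def Proj (sgn : ℝ) (ξ : E2) : Matrix (Fin 2) (Fin 2) ℂ :=
  (2 : ℂ)⁻¹ • (1 + ((sgn / ‖ξ‖ : ℝ) : ℂ) •
    (((ξ 0 : ℝ) : ℂ) • alpha1 + ((ξ 1 : ℝ) : ℂ) • alpha2))

/-- Matrix acting on a vector in ℂ². -/
def matVec (A : Matrix (Fin 2) (Fin 2) ℂ) (v : C2) : C2 :=
  (WithLp.equiv 2 (Fin 2 → ℂ)).symm (A.mulVec (WithLp.equiv 2 (Fin 2 → ℂ) v))

/-- Inner product ⟨z,w⟩ = w†z on ℂ², conjugate-linear in `w`. -/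
def cdot (z w : C2) : ℂ := star (w 0) * z 0 + star (w 1) * z 1

/-- The Fourier multiplier Π_±(D). -/
def PiD (sgn : ℝ) (ψ : ℝ × E2 → C2) (p : ℝ × E2) : C2 :=
  ((2 * Real.pi) ^ (-(3 : ℝ)) : ℝ) •
    ∫ q : ℝ × E2,
      Complex.exp (Complex.I * ((p.1 * q.1 + ⟪p.2, q.2⟫ : ℝ) : ℂ)) •
        matVec (Proj sgn q.2) (FTst ψ q)

/-- The free wave S_±(t)f, sign encoded by `sgn ∈ {1,-1}`. -/
def freeWave (sgn : ℝ) (f : E2 → ℂ) (t : ℝ) (x : E2) : ℂ :=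
  (((2 * Real.pi) ^ (-(2 : ℝ)) : ℝ) : ℂ) *
    ∫ ξ : E2, Complex.exp (Complex.I * ((⟪x, ξ⟫ - sgn * t * ‖ξ‖ : ℝ) : ℂ)) * FT2 f ξ


/-!
Write `α(w) = w₁α¹ + w₂α²` and `Π(ω) = (1 + α(ω))/2`, so that `Π_±(ξ) = Π(±ξ/|ξ|)`. For a unit
vector `ω`, `α(ω)` is a hermitian symmetry anticommuting with `β`; hence `β Π(a) = Π(-a) β` and
`Π(b) Π(-b) = 0`. Therefore `Π(b) β Π(a) = Π(b) (Π(-a) - Π(-b)) β = Π(b) (α(b) - α(a)) β / 2`,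
whose operator norm is at most `|b - a| / 2`, since `Π(b)` is an orthogonal projection, `β` is
unitary and `w ↦ α(w)` is isometric. Finally the chord `|b - a|` between unit vectors is at most
the angle between them.
-/

section CStarAlgebra

variable {A : Type*} [CStarAlgebra A]

def symmetryProj (a : A) : A := (2 : ℂ)⁻¹ • (1 + a)

lemma isStarProjection_symmetryProj {a : A} (ha : IsSelfAdjoint a) (ha2 : a * a = 1) :
    IsStarProjection (symmetryProj a) where
  isIdempotentElem := by
    simp only [IsIdempotentElem, symmetryProj, smul_mul_smul_comm, add_mul, mul_add, one_mul,
      mul_one, ha2]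
    module
  isSelfAdjoint := by
    simp [IsSelfAdjoint, symmetryProj, ha.star_eq]

lemma symmetryProj_mul_symmetryProj_neg {a : A} (ha2 : a * a = 1) :
    symmetryProj a * symmetryProj (-a) = 0 := by
  simp only [symmetryProj, smul_mul_smul_comm, add_mul, mul_add, one_mul, mul_one, mul_neg, ha2]
  module

lemma mul_symmetryProj_of_anticomm {a β : A} (h : β * a = -(a * β)) :
    β * symmetryProj a = symmetryProj (-a) * β := by
  simp only [symmetryProj, mul_smul_comm, smul_mul_assoc, mul_add, add_mul, h, mul_one, one_mul,
    neg_mul]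

lemma norm_symmetryProj_mul_mul_symmetryProj_le {a b β : A} (hb : IsSelfAdjoint b)
    (hb2 : b * b = 1) (hβa : β * a = -(a * β)) :
    ‖symmetryProj b * β * symmetryProj a‖ ≤ ‖b - a‖ / 2 * ‖β‖ := by
  have hsub : symmetryProj (-a) - symmetryProj (-b) = (2 : ℂ)⁻¹ • (b - a) := by
    simp only [symmetryProj, ← smul_sub]
    congr 1
    abel
  have key : symmetryProj b * β * symmetryProj a =
      symmetryProj b * ((2 : ℂ)⁻¹ • (b - a)) * β := by
    rw [mul_assoc, mul_symmetryProj_of_anticomm hβa, ← hsub, mul_sub,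
      symmetryProj_mul_symmetryProj_neg hb2, sub_zero, mul_assoc]
  calc ‖symmetryProj b * β * symmetryProj a‖
      ≤ ‖symmetryProj b‖ * ‖(2 : ℂ)⁻¹ • (b - a)‖ * ‖β‖ := key ▸ norm_mul₃_le
    _ ≤ 1 * (‖b - a‖ / 2) * ‖β‖ := by
        gcongr
        · exact (isStarProjection_symmetryProj hb hb2).norm_le
        · simp [norm_smul, div_eq_inv_mul]
    _ = ‖b - a‖ / 2 * ‖β‖ := by rw [one_mul]

end CStarAlgebra

lemma InnerProductGeometry.norm_sub_le_angle {V : Type*} [NormedAddCommGroup V]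
    [InnerProductSpace ℝ V] {x y : V} (hx : ‖x‖ = 1) (hy : ‖y‖ = 1) :
    ‖x - y‖ ≤ angle x y := by
  rw [← sq_le_sq₀ (norm_nonneg _) (angle_nonneg x y), sq,
    norm_sub_sq_eq_norm_sq_add_norm_sq_sub_two_mul_norm_mul_norm_mul_cos_angle, hx, hy]
  linarith [Real.one_sub_sq_div_two_le_cos (x := angle x y), sq (angle x y)]

lemma abs_of_mem_signSet {s : ℝ} (hs : s ∈ signSet) : |s| = 1 := by
  rcases hs with rfl | rfl <;> norm_num

lemma norm_div_norm_smul_self {s : ℝ} (hs : s ∈ signSet) {ξ : E2} (hξ : ξ ≠ 0) :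
    ‖(s / ‖ξ‖) • ξ‖ = 1 := by
  rw [norm_smul, Real.norm_eq_abs, abs_div, abs_of_mem_signSet hs, abs_norm,
    div_mul_cancel₀ _ (norm_ne_zero_iff.mpr hξ)]

lemma angle_div_norm_smul_div_norm_smul (s t : ℝ) {η ζ : E2} (hη : η ≠ 0) (hζ : ζ ≠ 0) :
    InnerProductGeometry.angle ((s / ‖η‖) • η) ((t / ‖ζ‖) • ζ) =
      InnerProductGeometry.angle (s • η) (t • ζ) := by
  rw [div_eq_inv_mul, div_eq_inv_mul, mul_smul, mul_smul,
    InnerProductGeometry.angle_smul_left_of_pos _ _ (inv_pos.2 (norm_pos_iff.2 hη)),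
    InnerProductGeometry.angle_smul_right_of_pos _ _ (inv_pos.2 (norm_pos_iff.2 hζ))]

def diracAlpha (w : E2) : Matrix (Fin 2) (Fin 2) ℂ :=
  ((w 0 : ℝ) : ℂ) • alpha1 + ((w 1 : ℝ) : ℂ) • alpha2

lemma diracAlpha_sub (v w : E2) : diracAlpha (v - w) = diracAlpha v - diracAlpha w := by
  simp only [diracAlpha, PiLp.sub_apply, Complex.ofReal_sub, sub_smul]
  abel

lemma diracAlpha_smul (r : ℝ) (w : E2) : diracAlpha (r • w) = (r : ℂ) • diracAlpha w := by
  simp only [diracAlpha, PiLp.smul_apply, smul_eq_mul, Complex.ofReal_mul, smul_add, mul_smul]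

lemma isSelfAdjoint_diracAlpha (w : E2) : IsSelfAdjoint (diracAlpha w) := by
  ext i j
  fin_cases i <;> fin_cases j <;> simp [diracAlpha, alpha1, alpha2]

lemma diracAlpha_mul_self (w : E2) :
    diracAlpha w * diracAlpha w = ((‖w‖ ^ 2 : ℝ) : ℂ) • 1 := by
  rw [EuclideanSpace.real_norm_sq_eq, Fin.sum_univ_two]
  ext i j
  fin_cases i <;> fin_cases j <;> simp [diracAlpha, alpha1, alpha2, Matrix.mul_apply] <;> ring_nf <;>
    simp

lemma diracBeta_mul_diracAlpha (w : E2) :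
    diracBeta * diracAlpha w = -(diracAlpha w * diracBeta) := by
  ext i j
  fin_cases i <;> fin_cases j <;> simp [diracAlpha, alpha1, alpha2, diracBeta, Matrix.mul_apply]

section L2OpNorm

open scoped Matrix.Norms.L2Operator

lemma Proj_eq_symmetryProj (sgn : ℝ) (ξ : E2) :
    Proj sgn ξ = symmetryProj (diracAlpha ((sgn / ‖ξ‖) • ξ)) := by
  rw [Proj, symmetryProj, diracAlpha_smul, diracAlpha]

lemma norm_diracAlpha (w : E2) : ‖diracAlpha w‖ = ‖w‖ := by
  have h := (isSelfAdjoint_diracAlpha w).norm_mul_self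
  rw [diracAlpha_mul_self, norm_smul, norm_one, mul_one, Complex.norm_real, Real.norm_eq_abs,
    abs_of_nonneg (by positivity)] at h
  exact ((pow_left_inj₀ (norm_nonneg _) (norm_nonneg _) two_ne_zero).mp h).symm

lemma norm_diracBeta : ‖diracBeta‖ = 1 := by
  refine CStarRing.norm_of_mem_unitary (Unitary.mem_iff.mpr ⟨?_, ?_⟩) <;>
  · ext i j
    fin_cases i <;> fin_cases j <;> simp [diracBeta, Matrix.mul_apply]

lemma norm_toEuclideanCLM_Proj_mul_diracBeta_mul_Proj_le (sgn1 : ℝ) {sgn2 : ℝ}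
    (hs2 : sgn2 ∈ signSet) (η : E2) {ζ : E2} (hζ : ζ ≠ 0) :
    ‖Matrix.toEuclideanCLM (𝕜 := ℂ) (Proj sgn2 ζ * diracBeta * Proj sgn1 η)‖ ≤
      ‖(sgn2 / ‖ζ‖) • ζ - (sgn1 / ‖η‖) • η‖ / 2 := by
  have hv2 : diracAlpha ((sgn2 / ‖ζ‖) • ζ) * diracAlpha ((sgn2 / ‖ζ‖) • ζ) = 1 := by
    simp [diracAlpha_mul_self, norm_div_norm_smul_self hs2 hζ]
  rw [Matrix.l2_opNorm_toEuclideanCLM, Proj_eq_symmetryProj, Proj_eq_symmetryProj]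
  refine (norm_symmetryProj_mul_mul_symmetryProj_le (isSelfAdjoint_diracAlpha _) hv2
    (diracBeta_mul_diracAlpha _)).trans_eq ?_
  rw [← diracAlpha_sub, norm_diracAlpha, norm_diracBeta, mul_one]

end L2OpNorm

/-- Lemma 1 of the paper (null structure): the operator-norm bound
‖Π_{±₂}(ζ) β Π_{±₁}(η)‖ ≤ C ∠(±₁η, ±₂ζ) for nonzero η, ζ ∈ ℝ². -/
theorem nullform_symbol_bound :
    ∃ C : ℝ,
      ∀ sgn1 ∈ signSet, ∀ sgn2 ∈ signSet,
        ∀ η ζ : E2, η ≠ 0 → ζ ≠ 0 →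
          ‖Matrix.toEuclideanCLM (𝕜 := ℂ) (Proj sgn2 ζ * diracBeta * Proj sgn1 η)‖
            ≤ C * InnerProductGeometry.angle (sgn1 • η) (sgn2 • ζ) := by
  refine ⟨1 / 2, fun sgn1 hs1 sgn2 hs2 η ζ hη hζ => ?_⟩
  have hchord := InnerProductGeometry.norm_sub_le_angle (norm_div_norm_smul_self hs2 hζ)
    (norm_div_norm_smul_self hs1 hη)
  rw [InnerProductGeometry.angle_comm, angle_div_norm_smul_div_norm_smul _ _ hη hζ] at hchord
  calc ‖Matrix.toEuclideanCLM (𝕜 := ℂ) (Proj sgn2 ζ * diracBeta * Proj sgn1 η)‖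
      ≤ ‖(sgn2 / ‖ζ‖) • ζ - (sgn1 / ‖η‖) • η‖ / 2 :=
        norm_toEuclideanCLM_Proj_mul_diracBeta_mul_Proj_le sgn1 hs2 η hζ
    _ ≤ 1 / 2 * InnerProductGeometry.angle (sgn1 • η) (sgn2 • ζ) := by linarith

end
end

section
/- There exist absolute constants 0 < c ≤ C such that for all η, ξ ∈ ℝ² with η ≠ 0 and η ≠ ξ, setting θ₊ = ∠(η, η-ξ), θ₋ = ∠(η, ξ-η), ρ₊ = |ξ| - ||η| - |η-ξ||, and ρ₋ = |η| + |η-ξ| - |ξ|, one has c θ₊² ≤ |ξ| ρ₊ / (|η| |η-ξ|) ≤ C θ₊² and c θ₋² ≤ (|η| + |η-ξ|) ρ₋ / (|η| |η-ξ|) ≤ C θ₋². -/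
/-!
By the law of cosines, and since `θ₋ = π - θ₊`,
`|ξ|² - (|η| - |η - ξ|)² = 2 |η| |η - ξ| (1 - cos θ₊)` and
`(|η| + |η - ξ|)² - |ξ|² = 2 |η| |η - ξ| (1 - cos θ₋)`.
Both quantities to be estimated have the form `s (s - t)` with `0 ≤ t ≤ s`, and
`s (s - t) = (s² - t²) · s / (s + t)` with `s / (s + t) ∈ [1/2, 1]`. So each is comparable to
`1 - cos θ±`, which lies between `2 θ² / π²` and `θ² / 2` on `[0, π]`.
-/

noncomputable section

open MeasureTheory Real
open scoped ENNReal
open scoped RealInnerProductSpace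

lemma sq_sub_sq_div_two_le_mul_sub {s t : ℝ} (ht : 0 ≤ t) (hts : t ≤ s) :
    (s ^ 2 - t ^ 2) / 2 ≤ s * (s - t) ∧ s * (s - t) ≤ s ^ 2 - t ^ 2 :=
  ⟨by nlinarith [sq_nonneg (s - t)], by nlinarith⟩

lemma two_div_pi_sq_mul_sq_le_one_sub_cos {φ : ℝ} (h0 : 0 ≤ φ) (hπ : φ ≤ π) :
    2 / π ^ 2 * φ ^ 2 ≤ 1 - cos φ := by
  linarith [cos_le_one_sub_mul_cos_sq (abs_le.mpr ⟨by linarith [pi_pos], hπ⟩)]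

lemma two_mul_one_sub_cos_le_sq (φ : ℝ) : 2 * (1 - cos φ) ≤ φ ^ 2 := by
  linarith [one_sub_sq_div_two_le_cos (x := φ)]

lemma mul_sub_div_bounds_of_sq_sub_sq_eq {s t p φ : ℝ} (ht : 0 ≤ t) (hts : t ≤ s) (hp : 0 < p)
    (h0 : 0 ≤ φ) (hπ : φ ≤ π) (h : s ^ 2 - t ^ 2 = 2 * p * (1 - cos φ)) :
    2 / π ^ 2 * φ ^ 2 ≤ s * (s - t) / p ∧ s * (s - t) / p ≤ φ ^ 2 := by
  obtain ⟨hlow, hupp⟩ := sq_sub_sq_div_two_le_mul_sub ht hts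
  have hcos_low := two_div_pi_sq_mul_sq_le_one_sub_cos h0 hπ
  have hcos_upp := two_mul_one_sub_cos_le_sq φ
  constructor
  · rw [le_div_iff₀ hp]; nlinarith
  · rw [div_le_iff₀ hp]; nlinarith

section InnerProductSpace

open InnerProductGeometry

variable {V : Type*} [NormedAddCommGroup V] [InnerProductSpace ℝ V]

lemma norm_sub_sq_sub_sq_norm_sub_norm (x y : V) :
    ‖x - y‖ ^ 2 - |‖x‖ - ‖y‖| ^ 2 = 2 * (‖x‖ * ‖y‖) * (1 - cos (angle x y)) := by
  rw [sq_abs]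
  linear_combination norm_sub_sq_eq_norm_sq_add_norm_sq_sub_two_mul_norm_mul_norm_mul_cos_angle x y

lemma norm_add_norm_sq_sub_norm_sub_sq (x y : V) :
    (‖x‖ + ‖y‖) ^ 2 - ‖x - y‖ ^ 2 = 2 * (‖x‖ * ‖y‖) * (1 - cos (angle x (-y))) := by
  rw [angle_neg_right, cos_pi_sub]
  linear_combination -norm_sub_sq_eq_norm_sq_add_norm_sq_sub_two_mul_norm_mul_norm_mul_cos_angle x y

end InnerProductSpace

/-- The angle estimates (4.4) of the paper:
θ₊² ∼ |ξ|ρ₊/(|η||η-ξ|) and θ₋² ∼ (|η|+|η-ξ|)ρ₋/(|η||η-ξ|). -/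
theorem angle_estimates :
    ∃ c C : ℝ, 0 < c ∧ c ≤ C ∧
      ∀ η ξ : E2, η ≠ 0 → η ≠ ξ →
        (c * InnerProductGeometry.angle η (η - ξ) ^ 2
            ≤ ‖ξ‖ * (‖ξ‖ - |(‖η‖ - ‖η - ξ‖)|) / (‖η‖ * ‖η - ξ‖) ∧
          ‖ξ‖ * (‖ξ‖ - |(‖η‖ - ‖η - ξ‖)|) / (‖η‖ * ‖η - ξ‖)
            ≤ C * InnerProductGeometry.angle η (η - ξ) ^ 2) ∧
        (c * InnerProductGeometry.angle η (ξ - η) ^ 2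
            ≤ (‖η‖ + ‖η - ξ‖) * (‖η‖ + ‖η - ξ‖ - ‖ξ‖) / (‖η‖ * ‖η - ξ‖) ∧
          (‖η‖ + ‖η - ξ‖) * (‖η‖ + ‖η - ξ‖ - ‖ξ‖) / (‖η‖ * ‖η - ξ‖)
            ≤ C * InnerProductGeometry.angle η (ξ - η) ^ 2) := by
  refine ⟨2 / π ^ 2, 1, by positivity, ?_, fun η ξ hη hηξ => ?_⟩
  · rw [div_le_one (by positivity)]
    nlinarith [pi_gt_three]
  have hp : 0 < ‖η‖ * ‖η - ξ‖ :=
    mul_pos (norm_pos_iff.mpr hη) (norm_pos_iff.mpr (sub_ne_zero.mpr hηξ))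
  have hξ : η - (η - ξ) = ξ := sub_sub_cancel η ξ
  have hneg : -(η - ξ) = ξ - η := neg_sub η ξ
  simp only [one_mul]
  constructor
  · apply mul_sub_div_bounds_of_sq_sub_sq_eq (abs_nonneg _) _ hp
      (InnerProductGeometry.angle_nonneg _ _) (InnerProductGeometry.angle_le_pi _ _)
    · simpa only [hξ] using norm_sub_sq_sub_sq_norm_sub_norm η (η - ξ)
    · simpa only [hξ] using abs_norm_sub_norm_le η (η - ξ)
  · apply mul_sub_div_bounds_of_sq_sub_sq_eq (norm_nonneg _) _ hp
      (InnerProductGeometry.angle_nonneg _ _) (InnerProductGeometry.angle_le_pi _ _)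
    · simpa only [hξ, hneg] using norm_add_norm_sq_sub_norm_sub_sq η (η - ξ)
    · simpa only [hξ] using norm_sub_le η (η - ξ)

end
end
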